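/- arXiv:2309.15170 — 2 statements merged into one kernel-verified Lean document; each statement's English description precedes it below -/
import Mathlib

section
/- (Lemma on stationary points of low-rank tensor approximation) Let X = X1' · X2 · X3'' be in the fixed TT-rank (r1,r2) manifold with X1' in St(r1,n1), X3''^T in St(r2,n3), and suppose X2'' := R · X2' · C (with X2 = X2'·C left-orthogonal conventions as stated) satisfies the orthogonality conventions. Let A = A1' · A2 · A3'' have TT-rank (r1', r2') with A1' in St(r1',n1), A3''^T in St(r2',n3). If the Riemannian gradient of f(Z) = (1/2)‖Z − A‖² at X vanishes (equivalently Ẇ1 = 0, W̃2 = 0, Ŵ3 = 0 in the tangent-space parametrization), then there exist B1 in St(r1, r1') and B3 with B3^T in St(r2, r2') such that X1' = A1' B1, X3'' = B3 A3'', and X2 = B1^T · A2 · B3^T. -/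
open Matrix Kronecker

/-- Left unfolding of a third-order tensor (column-major convention:
the second mode index varies fastest in the column index `(c, b)`). -/
def tL {a b c : ℕ} (X : Fin a → Fin b → Fin c → ℝ) : Matrix (Fin a) (Fin c × Fin b) ℝ :=
  Matrix.of fun i p => X i p.2 p.1

/-- Right unfolding of a third-order tensor (the first mode index varies
fastest in the row index `(b, a)`). -/
def tR {a b c : ℕ} (X : Fin a → Fin b → Fin c → ℝ) : Matrix (Fin b × Fin a) (Fin c) ℝ :=
  Matrix.of fun p k => X p.2 p.1 k

/-- Tensor-train product `X1 · X2 · X3` of a matrix, a core tensor and a matrix. -/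
def tt {a r1 b r2 c : ℕ} (X1 : Matrix (Fin a) (Fin r1) ℝ) (X2 : Fin r1 → Fin b → Fin r2 → ℝ)
    (X3 : Matrix (Fin r2) (Fin c) ℝ) : Fin a → Fin b → Fin c → ℝ :=
  fun i j k => ∑ p : Fin r1, ∑ q : Fin r2, X1 i p * X2 p j q * X3 q k

/-- Euclidean inner product of (the vectorizations of) two third-order tensors. -/
def tinner {a b c : ℕ} (Y Z : Fin a → Fin b → Fin c → ℝ) : ℝ :=
  ∑ i, ∑ j, ∑ k, Y i j k * Z i j k

/-- Contraction of a matrix with a tensor on the first mode: `M · Y`. -/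
def m1 {a a' b c : ℕ} (M : Matrix (Fin a) (Fin a') ℝ) (Y : Fin a' → Fin b → Fin c → ℝ) :
    Fin a → Fin b → Fin c → ℝ := fun i j k => ∑ p, M i p * Y p j k

/-- Contraction of a tensor with a matrix on the third mode: `Y · N`. -/
def m3 {a b c c' : ℕ} (Y : Fin a → Fin b → Fin c → ℝ) (N : Matrix (Fin c) (Fin c') ℝ) :
    Fin a → Fin b → Fin c' → ℝ := fun i j k => ∑ p, Y i j p * N p k

/-- Inverse of the left unfolding: reshape a matrix back into a tensor. -/
def unL {a b c : ℕ} (M : Matrix (Fin a) (Fin c × Fin b) ℝ) : Fin a → Fin b → Fin c → ℝ :=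
  fun i j k => M i (k, j)

/-!
Testing the stationarity condition against each block of the tangent space separately
makes a projection of the residual `X - A` vanish: `tL (X - A)` against the row space of the
left-orthogonal unfolding of `X2'' · X3''`, `tR (X - A)` against the column space of the
right-orthogonal unfolding of `X1' · X2'`, and the core projection `X1'ᵀ · (X - A) · X3''ᵀ`.
As `X` itself lies in the first two spaces, `tL X = tL A · Mᵀ M` and `tR X = N Nᵀ · tR A`
for these orthonormal unfoldings `M` and `N`;
since the unfoldings of `X` have full rank `r1`, `r2`, the range of `X1'` lies in that of
`A1'` and the row space of `X3''` in that of `A3''`, so `X1' = A1' B1`, `X3'' = B3 A3''`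
with isometries `B1`, `B3`. The core projection then reads `X2 = B1ᵀ · A2 · B3ᵀ`.
-/

namespace Matrix

variable {K : Type*} [Field K] {m n k p r : Type*}

theorem exists_mul_eq_one_of_rank_eq [Fintype n] [Fintype r] [DecidableEq r] (L : Matrix r n K) (hL : L.rank = Fintype.card r) :
    ∃ B : Matrix n r K, L * B = 1 := by
  rw [← mulVec_surjective_iff_exists_right_inverse, ← coe_mulVecLin, ← LinearMap.range_eq_top]
  apply Submodule.eq_top_of_finrank_eq
  rw [Module.finrank_fintype_fun_eq_card]
  exact hL

theorem rank_eq_card_of_rank_mul_eq [Fintype n] [Fintype r] (X : Matrix m r K) (L : Matrix r n K)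
    (h : (X * L).rank = Fintype.card r) : L.rank = Fintype.card r :=
  le_antisymm (rank_le_card_height L) (h ▸ rank_mul_le_right X L)

theorem exists_eq_mul_of_sub_mul_transpose_eq_zero [Fintype n] [Fintype k] [Fintype p]
    [Fintype r] [DecidableEq k] [DecidableEq r]
    {X : Matrix m r K} {L : Matrix r n K} {Y : Matrix m k K} {M : Matrix k n K}
    {A : Matrix m p K} {N : Matrix p n K}
    (hM : M * Mᵀ = 1) (hXY : X * L = Y * M) (hrk : (X * L).rank = Fintype.card r)
    (hG : (X * L - A * N) * Mᵀ = 0) : ∃ C : Matrix p r K, X = A * C := by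
  obtain ⟨B, hB⟩ := exists_mul_eq_one_of_rank_eq L (rank_eq_card_of_rank_mul_eq X L hrk)
  rw [Matrix.sub_mul, sub_eq_zero] at hG
  have hproj : X * L = A * N * Mᵀ * M := by
    rw [← hG, hXY, Matrix.mul_assoc Y, hM, Matrix.mul_one]
  refine ⟨N * Mᵀ * M * B, ?_⟩
  rw [← Matrix.mul_one X, ← hB, ← Matrix.mul_assoc, hproj]
  simp only [Matrix.mul_assoc]

theorem exists_eq_mul_of_transpose_mul_sub_eq_zero [Fintype m] [Fintype n] [Fintype k]
    [Fintype p] [Fintype r] [DecidableEq k] [DecidableEq r]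
    {X : Matrix r m K} {L : Matrix n r K} {Y : Matrix k m K} {M : Matrix n k K}
    {A : Matrix p m K} {N : Matrix n p K}
    (hM : Mᵀ * M = 1) (hXY : L * X = M * Y) (hrk : (L * X).rank = Fintype.card r)
    (hG : Mᵀ * (L * X - N * A) = 0) : ∃ C : Matrix r p K, X = C * A := by
  obtain ⟨C, hC⟩ := exists_eq_mul_of_sub_mul_transpose_eq_zero (X := Xᵀ) (L := Lᵀ) (Y := Yᵀ)
    (M := Mᵀ) (A := Aᵀ) (N := Nᵀ) (by simpa using hM)
    (by rw [← transpose_mul, hXY, transpose_mul])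
    (by rw [← transpose_mul, rank_transpose, hrk])
    (by rw [← transpose_mul, ← transpose_mul, ← transpose_sub, ← transpose_transpose M,
      ← transpose_mul, transpose_transpose, hG, transpose_zero])
  exact ⟨Cᵀ, by rw [← transpose_transpose X, hC, transpose_mul, transpose_transpose]⟩

theorem exists_transpose_mul_self_eq_one_of_eq_mul [Fintype m] [Fintype p] [DecidableEq p]
    [DecidableEq r]
    {X : Matrix m r K} {A : Matrix m p K} {C : Matrix p r K}
    (hA : Aᵀ * A = 1) (hX : Xᵀ * X = 1) (h : X = A * C) :
    ∃ B : Matrix p r K, Bᵀ * B = 1 ∧ X = A * B := by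
  refine ⟨C, ?_, h⟩
  rw [← hX, h, transpose_mul, Matrix.mul_assoc, ← Matrix.mul_assoc Aᵀ, hA, Matrix.one_mul]

theorem exists_mul_transpose_eq_one_of_eq_mul [Fintype m] [Fintype p] [DecidableEq p]
    [DecidableEq r]
    {X : Matrix r m K} {A : Matrix p m K} {C : Matrix r p K}
    (hA : A * Aᵀ = 1) (hX : X * Xᵀ = 1) (h : X = C * A) :
    ∃ B : Matrix r p K, B * Bᵀ = 1 ∧ X = B * A := by
  obtain ⟨B, hB, hXB⟩ := exists_transpose_mul_self_eq_one_of_eq_mul (X := Xᵀ) (A := Aᵀ)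
    (C := Cᵀ) (by simpa using hA) (by simpa using hX) (by rw [h, transpose_mul])
  exact ⟨Bᵀ, by simpa using hB, by rw [← transpose_transpose X, hXB, transpose_mul,
    transpose_transpose]⟩

end Matrix

section TensorTrain

variable {a b c r1 r2 s1 s2 : ℕ}

def tslice (Y : Fin a → Fin b → Fin c → ℝ) (j : Fin b) : Matrix (Fin a) (Fin c) ℝ :=
  Matrix.of fun i k => Y i j k

theorem tensor_ext {Y Z : Fin a → Fin b → Fin c → ℝ} (h : ∀ j, tslice Y j = tslice Z j) :
    Y = Z :=
  funext fun i => funext fun j => funext fun k => congrFun (congrFun (h j) i) k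

theorem tslice_sub (Y Z : Fin a → Fin b → Fin c → ℝ) (j : Fin b) :
    tslice (Y - Z) j = tslice Y j - tslice Z j :=
  rfl

theorem tslice_tt (P : Matrix (Fin a) (Fin r1) ℝ) (Q : Fin r1 → Fin b → Fin r2 → ℝ)
    (R : Matrix (Fin r2) (Fin c) ℝ) (j : Fin b) :
    tslice (tt P Q R) j = P * tslice Q j * R := by
  ext i k
  simp only [tslice, tt, of_apply, mul_apply, Finset.sum_mul, mul_assoc]
  exact Finset.sum_comm

theorem tinner_eq_sum_trace (Y Z : Fin a → Fin b → Fin c → ℝ) :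
    tinner Y Z = ∑ j, trace (tslice Y j * (tslice Z j)ᵀ) := by
  simp only [tinner, trace, diag, mul_apply, transpose_apply, tslice, of_apply]
  exact Finset.sum_comm

theorem tt_tt (P : Matrix (Fin a) (Fin r1) ℝ) (Q : Matrix (Fin r1) (Fin s1) ℝ)
    (Y : Fin s1 → Fin b → Fin s2 → ℝ) (R : Matrix (Fin s2) (Fin r2) ℝ)
    (S : Matrix (Fin r2) (Fin c) ℝ) :
    tt P (tt Q Y R) S = tt (P * Q) Y (R * S) :=
  tensor_ext fun j => by simp only [tslice_tt, Matrix.mul_assoc]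

theorem tt_one_one (Y : Fin a → Fin b → Fin c → ℝ) : tt 1 Y 1 = Y :=
  tensor_ext fun j => by rw [tslice_tt, Matrix.one_mul, Matrix.mul_one]

theorem tt_sub_middle (P : Matrix (Fin a) (Fin r1) ℝ) (Y Z : Fin r1 → Fin b → Fin r2 → ℝ)
    (R : Matrix (Fin r2) (Fin c) ℝ) : tt P (Y - Z) R = tt P Y R - tt P Z R :=
  tensor_ext fun j => by
    simp only [tslice_sub, tslice_tt, Matrix.mul_sub, Matrix.sub_mul]

theorem tinner_tt_right (Y : Fin a → Fin b → Fin c → ℝ) (P : Matrix (Fin a) (Fin r1) ℝ)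
    (Q : Fin r1 → Fin b → Fin r2 → ℝ) (R : Matrix (Fin r2) (Fin c) ℝ) :
    tinner Y (tt P Q R) = tinner (tt Pᵀ Y Rᵀ) Q := by
  simp only [tinner_eq_sum_trace, tslice_tt, transpose_mul]
  refine Finset.sum_congr rfl fun j _ => ?_
  simp only [Matrix.mul_assoc]
  rw [trace_mul_comm Pᵀ]
  simp only [Matrix.mul_assoc]

theorem tinner_add_right (Y Z W : Fin a → Fin b → Fin c → ℝ) :
    tinner Y (Z + W) = tinner Y Z + tinner Y W := by
  simp only [tinner, Pi.add_apply, mul_add, Finset.sum_add_distrib]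

@[simp]
theorem tt_zero_left (Q : Fin r1 → Fin b → Fin r2 → ℝ) (R : Matrix (Fin r2) (Fin c) ℝ) :
    tt (0 : Matrix (Fin a) (Fin r1) ℝ) Q R = 0 := by
  funext i j k; simp [tt]

@[simp]
theorem tt_zero_middle (P : Matrix (Fin a) (Fin r1) ℝ) (R : Matrix (Fin r2) (Fin c) ℝ) :
    tt P (0 : Fin r1 → Fin b → Fin r2 → ℝ) R = 0 := by
  funext i j k; simp [tt]

@[simp]
theorem tt_zero_right (P : Matrix (Fin a) (Fin r1) ℝ) (Q : Fin r1 → Fin b → Fin r2 → ℝ) :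
    tt P Q (0 : Matrix (Fin r2) (Fin c) ℝ) = 0 := by
  funext i j k; simp [tt]

theorem tL_injective : Function.Injective (tL : (Fin a → Fin b → Fin c → ℝ) → _) :=
  fun _ _ h => funext fun i => funext fun j => funext fun k => congrFun (congrFun h i) (k, j)

theorem tinner_tL (Y Z : Fin a → Fin b → Fin c → ℝ) :
    tinner Y Z = trace (tL Y * (tL Z)ᵀ) := by
  simp only [tinner, trace, diag, mul_apply, transpose_apply, tL, of_apply,
    Fintype.sum_prod_type]
  exact Finset.sum_congr rfl fun i _ => Finset.sum_comm

theorem tinner_tR (Y Z : Fin a → Fin b → Fin c → ℝ) :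
    tinner Y Z = trace ((tR Y)ᵀ * tR Z) := by
  simp only [tinner, trace, diag, mul_apply, transpose_apply, tR, of_apply,
    Fintype.sum_prod_type]
  conv_lhs => enter [2, i]; rw [Finset.sum_comm]
  conv_lhs => rw [Finset.sum_comm]; enter [2, k]; rw [Finset.sum_comm]

theorem tinner_self_eq_zero {Y : Fin a → Fin b → Fin c → ℝ} (h : tinner Y Y = 0) : Y = 0 := by
  rw [tinner_tL, ← conjTranspose_eq_transpose_of_trivial,
    trace_mul_conjTranspose_self_eq_zero_iff] at h
  exact tL_injective h

theorem tL_sub (Y Z : Fin a → Fin b → Fin c → ℝ) : tL (Y - Z) = tL Y - tL Z :=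
  rfl

theorem tR_sub (Y Z : Fin a → Fin b → Fin c → ℝ) : tR (Y - Z) = tR Y - tR Z :=
  rfl

theorem tL_tt (P : Matrix (Fin a) (Fin r1) ℝ) (Q : Fin r1 → Fin b → Fin r2 → ℝ)
    (R : Matrix (Fin r2) (Fin c) ℝ) : tL (tt P Q R) = P * tL (m3 Q R) := by
  ext i x
  simp [tL, tt, m3, mul_apply, Finset.mul_sum, mul_assoc]

theorem tR_tt (P : Matrix (Fin a) (Fin r1) ℝ) (Q : Fin r1 → Fin b → Fin r2 → ℝ)
    (R : Matrix (Fin r2) (Fin c) ℝ) : tR (tt P Q R) = tR (m1 P Q) * R := by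
  ext x k
  simp only [tR, tt, m1, of_apply, mul_apply, Finset.sum_mul]
  exact Finset.sum_comm

theorem tL_m3 (Y : Fin a → Fin b → Fin r2 → ℝ) (R : Matrix (Fin r2) (Fin c) ℝ) :
    tL (m3 Y R) = tL Y * (R ⊗ₖ (1 : Matrix (Fin b) (Fin b) ℝ)) := by
  ext i x
  simp only [tL, m3, of_apply, mul_apply, Fintype.sum_prod_type, kroneckerMap_apply,
    one_apply, mul_ite, mul_one, mul_zero, Finset.sum_ite_eq',
    Finset.mem_univ, if_true]

theorem tR_m1 (P : Matrix (Fin a) (Fin r1) ℝ) (Y : Fin r1 → Fin b → Fin c → ℝ) :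
    tR (m1 P Y) = ((1 : Matrix (Fin b) (Fin b) ℝ) ⊗ₖ P) * tR Y := by
  ext x k
  simp only [tR, m1, of_apply, mul_apply, Fintype.sum_prod_type, kroneckerMap_apply,
    one_apply, ite_mul, one_mul, zero_mul]
  rw [Finset.sum_comm]
  simp

theorem tL_m3_mul_transpose_eq_one {Y : Fin a → Fin b → Fin r2 → ℝ}
    {R : Matrix (Fin r2) (Fin c) ℝ} (hY : tL Y * (tL Y)ᵀ = 1) (hR : R * Rᵀ = 1) :
    tL (m3 Y R) * (tL (m3 Y R))ᵀ = 1 := by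
  rw [tL_m3, transpose_mul, Matrix.mul_assoc, ← Matrix.mul_assoc (R ⊗ₖ 1),
    ← kroneckerMap_transpose, ← mul_kronecker_mul, hR, transpose_one, Matrix.mul_one,
    one_kronecker_one, Matrix.one_mul, hY]

theorem tR_m1_transpose_mul_eq_one {P : Matrix (Fin a) (Fin r1) ℝ}
    {Y : Fin r1 → Fin b → Fin c → ℝ} (hY : (tR Y)ᵀ * tR Y = 1) (hP : Pᵀ * P = 1) :
    (tR (m1 P Y))ᵀ * tR (m1 P Y) = 1 := by
  rw [tR_m1, transpose_mul, Matrix.mul_assoc, ← Matrix.mul_assoc (1 ⊗ₖ P)ᵀ,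
    ← kroneckerMap_transpose, ← mul_kronecker_mul, hP, transpose_one, Matrix.mul_one,
    one_kronecker_one, Matrix.one_mul, hY]

theorem tL_mul_transpose_eq_zero_of_forall_tinner {Y : Fin a → Fin b → Fin c → ℝ}
    {Q : Fin r1 → Fin b → Fin r2 → ℝ} {R : Matrix (Fin r2) (Fin c) ℝ}
    (h : ∀ W : Matrix (Fin a) (Fin r1) ℝ, tinner Y (tt W Q R) = 0) :
    tL Y * (tL (m3 Q R))ᵀ = 0 := by
  have hW := h (tL Y * (tL (m3 Q R))ᵀ)
  rw [tinner_tL, tL_tt, transpose_mul, ← Matrix.mul_assoc] at hW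
  exact trace_mul_conjTranspose_self_eq_zero_iff.mp hW

theorem transpose_mul_tR_eq_zero_of_forall_tinner {Y : Fin a → Fin b → Fin c → ℝ}
    {P : Matrix (Fin a) (Fin r1) ℝ} {Q : Fin r1 → Fin b → Fin r2 → ℝ}
    (h : ∀ W : Matrix (Fin r2) (Fin c) ℝ, tinner Y (tt P Q W) = 0) :
    (tR (m1 P Q))ᵀ * tR Y = 0 := by
  have hW := h ((tR (m1 P Q))ᵀ * tR Y)
  rw [tinner_tR, tR_tt, ← Matrix.mul_assoc, ← transpose_transpose (tR (m1 P Q)),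
    ← transpose_mul, transpose_transpose] at hW
  exact trace_conjTranspose_mul_self_eq_zero_iff.mp hW

theorem tt_transpose_eq_zero_of_forall_tinner {Y : Fin a → Fin b → Fin c → ℝ}
    {P : Matrix (Fin a) (Fin r1) ℝ} {R : Matrix (Fin r2) (Fin c) ℝ}
    (h : ∀ W : Fin r1 → Fin b → Fin r2 → ℝ, tinner Y (tt P W R) = 0) :
    tt Pᵀ Y Rᵀ = 0 :=
  tinner_self_eq_zero (by rw [← tinner_tt_right, h])

end TensorTrain

theorem eq_tt_of_forall_tinner_tt_middle_eq_zero {n1 n2 n3 r1 r2 r1' r2' : ℕ}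
    {X1 : Matrix (Fin n1) (Fin r1) ℝ} {X2 : Fin r1 → Fin n2 → Fin r2 → ℝ}
    {X3 : Matrix (Fin r2) (Fin n3) ℝ} {A1 : Matrix (Fin n1) (Fin r1') ℝ}
    {A2 : Fin r1' → Fin n2 → Fin r2' → ℝ} {A3 : Matrix (Fin r2') (Fin n3) ℝ}
    {B1 : Matrix (Fin r1') (Fin r1) ℝ} {B3 : Matrix (Fin r2) (Fin r2') ℝ}
    (h1 : X1ᵀ * X1 = 1) (h3 : X3 * X3ᵀ = 1) (hA1 : A1ᵀ * A1 = 1) (hA3 : A3 * A3ᵀ = 1)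
    (hB1 : X1 = A1 * B1) (hB3 : X3 = B3 * A3)
    (h : ∀ W, tinner (tt X1 X2 X3 - tt A1 A2 A3) (tt X1 W X3) = 0) :
    X2 = tt B1ᵀ A2 B3ᵀ := by
  have hcore := tt_transpose_eq_zero_of_forall_tinner h
  rw [tt_sub_middle, sub_eq_zero, tt_tt, tt_tt, h1, h3, tt_one_one] at hcore
  rw [hcore, hB1, hB3, transpose_mul, transpose_mul, Matrix.mul_assoc, hA1, Matrix.mul_one,
    ← Matrix.mul_assoc, hA3, Matrix.one_mul]

theorem stmt12_general {n1 n2 n3 r1 r2 r1' r2' : ℕ}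
    (X1' X1 : Matrix (Fin n1) (Fin r1) ℝ)
    (X2 X2' X2'' : Fin r1 → Fin n2 → Fin r2 → ℝ)
    (X3'' X3 : Matrix (Fin r2) (Fin n3) ℝ)
    (A1' : Matrix (Fin n1) (Fin r1') ℝ) (A2 : Fin r1' → Fin n2 → Fin r2' → ℝ)
    (A3'' : Matrix (Fin r2') (Fin n3) ℝ) (A : Fin n1 → Fin n2 → Fin n3 → ℝ)
    (hA : A = tt A1' A2 A3'')
    (h1 : X1'ᵀ * X1' = 1) (h3 : X3'' * X3''ᵀ = 1)
    (h2' : (tR X2')ᵀ * tR X2' = 1) (h2'' : tL X2'' * (tL X2'')ᵀ = 1)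
    (hfac1 : tt X1' X2 X3'' = tt X1' X2' X3)
    (hfac2 : tt X1' X2 X3'' = tt X1 X2'' X3'')
    (hA1 : A1'ᵀ * A1' = 1) (hA3 : A3'' * A3''ᵀ = 1)
    (hrkL : (tL (tt X1' X2 X3'')).rank = r1) (hrkR : (tR (tt X1' X2 X3'')).rank = r2)
    (hstat : ∀ (W1 : Matrix (Fin n1) (Fin r1) ℝ) (W2 : Fin r1 → Fin n2 → Fin r2 → ℝ)
        (W3 : Matrix (Fin r2) (Fin n3) ℝ),
        tinner (tt X1' X2 X3'' - A)
          (tt X1' X2' W3 + tt X1' W2 X3'' + tt W1 X2'' X3'') = 0) :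
    ∃ (B1 : Matrix (Fin r1') (Fin r1) ℝ) (B3 : Matrix (Fin r2) (Fin r2') ℝ),
      B1ᵀ * B1 = 1 ∧ B3 * B3ᵀ = 1 ∧
      X1' = A1' * B1 ∧ X3'' = B3 * A3'' ∧ X2 = tt B1ᵀ A2 B3ᵀ := by
  subst hA
  have hst1 : ∀ W, tinner (tt X1' X2 X3'' - tt A1' A2 A3'') (tt W X2'' X3'') = 0 :=
    fun W => by simpa [tinner_add_right] using hstat W 0 0
  have hst2 : ∀ W, tinner (tt X1' X2 X3'' - tt A1' A2 A3'') (tt X1' W X3'') = 0 :=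
    fun W => by simpa [tinner_add_right] using hstat 0 W 0
  have hst3 : ∀ W, tinner (tt X1' X2 X3'' - tt A1' A2 A3'') (tt X1' X2' W) = 0 :=
    fun W => by simpa [tinner_add_right] using hstat 0 0 W
  have hG1 := tL_mul_transpose_eq_zero_of_forall_tinner hst1
  rw [tL_sub, tL_tt, tL_tt] at hG1
  have hG3 := transpose_mul_tR_eq_zero_of_forall_tinner hst3
  rw [tR_sub, tR_tt, tR_tt] at hG3
  obtain ⟨C1, hC1⟩ := exists_eq_mul_of_sub_mul_transpose_eq_zero
    (tL_m3_mul_transpose_eq_one h2'' h3) (by rw [← tL_tt, hfac2, tL_tt])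
    (by rw [← tL_tt, hrkL, Fintype.card_fin]) hG1
  obtain ⟨C3, hC3⟩ := exists_eq_mul_of_transpose_mul_sub_eq_zero
    (tR_m1_transpose_mul_eq_one h2' h1) (by rw [← tR_tt, hfac1, tR_tt])
    (by rw [← tR_tt, hrkR, Fintype.card_fin]) hG3
  obtain ⟨B1, hB1, hX1⟩ := exists_transpose_mul_self_eq_one_of_eq_mul hA1 h1 hC1
  obtain ⟨B3, hB3, hX3⟩ := exists_mul_transpose_eq_one_of_eq_mul hA3 h3 hC3
  exact ⟨B1, B3, hB1, hB3, hX1, hX3,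
    eq_tt_of_forall_tinner_tt_middle_eq_zero h1 h3 hA1 hA3 hX1 hX3 hst2⟩

theorem stmt12 {n1 n2 n3 r1 r2 r1' r2' : ℕ}
    (X1' X1 : Matrix (Fin n1) (Fin r1) ℝ)
    (X2 X2' X2'' : Fin r1 → Fin n2 → Fin r2 → ℝ)
    (X3'' X3 : Matrix (Fin r2) (Fin n3) ℝ)
    (A1' : Matrix (Fin n1) (Fin r1') ℝ) (A2 : Fin r1' → Fin n2 → Fin r2' → ℝ)
    (A3'' : Matrix (Fin r2') (Fin n3) ℝ) (A : Fin n1 → Fin n2 → Fin n3 → ℝ)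
    (hA : A = tt A1' A2 A3'')
    (h1 : X1'ᵀ * X1' = 1) (h3 : X3'' * X3''ᵀ = 1)
    (h2' : (tR X2')ᵀ * tR X2' = 1) (h2'' : tL X2'' * (tL X2'')ᵀ = 1)
    (hfac1 : tt X1' X2 X3'' = tt X1' X2' X3)
    (hfac2 : tt X1' X2 X3'' = tt X1 X2'' X3'')
    (hA1 : A1'ᵀ * A1' = 1) (hA3 : A3'' * A3''ᵀ = 1)
    (hrkL : (tL (tt X1' X2 X3'')).rank = r1) (hrkR : (tR (tt X1' X2 X3'')).rank = r2)
    (hArkL : (tL A).rank = r1') (hArkR : (tR A).rank = r2')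
    (hstat : ∀ (W1 : Matrix (Fin n1) (Fin r1) ℝ) (W2 : Fin r1 → Fin n2 → Fin r2 → ℝ)
        (W3 : Matrix (Fin r2) (Fin n3) ℝ),
        tinner (tt X1' X2 X3'' - A)
          (tt X1' X2' W3 + tt X1' W2 X3'' + tt W1 X2'' X3'') = 0) :
    ∃ (B1 : Matrix (Fin r1') (Fin r1) ℝ) (B3 : Matrix (Fin r2) (Fin r2') ℝ),
      B1ᵀ * B1 = 1 ∧ B3 * B3ᵀ = 1 ∧
      X1' = A1' * B1 ∧ X3'' = B3 * A3'' ∧ X2 = tt B1ᵀ A2 B3ᵀ :=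
  stmt12_general X1' X1 X2 X2' X2'' X3'' X3 A1' A2 A3'' A hA h1 h3 h2' h2'' hfac1 hfac2 hA1 hA3 hrkL
    hrkR hstat
end

section
/- If a tensor G in R^{n1×n2×n3} can be written as G = [X1' U1 Ẇ1] · T · [Ŵ3; V3; X3'']^T in block TT form (with block-upper-triangular middle core as in Kutschan's parametrization) satisfying the orthogonality conditions U1^T X1' = 0, Ẇ1^T X1' = 0, (U2^R)^T X2'^R = 0, Ŵ3 X3''^T = 0, V3 X3''^T = 0, and V̇2^L (X2''^L)^T = 0, then the six terms in the expansion of G (namely X1'·X2'·Ŵ3, X1'·U2·V3, X1'·W̃2·X3'', U1·Z2·V3, U1·V̇2·X3'', Ẇ1·X2''·X3'') are mutually orthogonal in the tensor inner product. -/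
open Matrix Kronecker

lemma key {a b c r1 r2 r1' r2' : ℕ} (A : Matrix (Fin a) (Fin r1) ℝ)
    (X : Fin r1 → Fin b → Fin r2 → ℝ) (B : Matrix (Fin r2) (Fin c) ℝ)
    (C : Matrix (Fin a) (Fin r1') ℝ) (Y : Fin r1' → Fin b → Fin r2' → ℝ)
    (D : Matrix (Fin r2') (Fin c) ℝ) :
    tinner (tt A X B) (tt C Y D)
      = ∑ p, ∑ p', ∑ q, ∑ q', (Aᵀ * C) p p' * ((B * Dᵀ) q q' * ∑ j, X p j q * Y p' j q') := by
  have h : tinner (tt A X B) (tt C Y D)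
      = ∑ u : Fin a × Fin b × Fin c, ∑ w : (Fin r1 × Fin r2) × (Fin r1' × Fin r2'),
          (A u.1 w.1.1 * X w.1.1 u.2.1 w.1.2 * B w.1.2 u.2.2) *
          (C u.1 w.2.1 * Y w.2.1 u.2.1 w.2.2 * D w.2.2 u.2.2) := by
    simp only [tinner, tt]
    rw [Fintype.sum_prod_type]
    apply Finset.sum_congr rfl; intro i _
    rw [Fintype.sum_prod_type]
    apply Finset.sum_congr rfl; intro j _
    apply Finset.sum_congr rfl; intro k _
    have e1 : (∑ p : Fin r1, ∑ q : Fin r2, A i p * X p j q * B q k)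
        = ∑ x : Fin r1 × Fin r2, A i x.1 * X x.1 j x.2 * B x.2 k := by
      rw [Fintype.sum_prod_type]
    have e2 : (∑ p : Fin r1', ∑ q : Fin r2', C i p * Y p j q * D q k)
        = ∑ y : Fin r1' × Fin r2', C i y.1 * Y y.1 j y.2 * D y.2 k := by
      rw [Fintype.sum_prod_type]
    rw [e1, e2, Finset.sum_mul_sum]
    conv_rhs => rw [Fintype.sum_prod_type]
  rw [h, Finset.sum_comm]
  simp only [Fintype.sum_prod_type, Matrix.mul_apply, transpose_apply, Finset.sum_mul,
    Finset.mul_sum]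
  apply Finset.sum_congr rfl; intro p _
  rw [Finset.sum_comm]
  apply Finset.sum_congr rfl; intro p' _
  apply Finset.sum_congr rfl; intro q _
  apply Finset.sum_congr rfl; intro q' _
  rw [Finset.sum_comm]
  apply Finset.sum_congr rfl; intro j _
  rw [Finset.sum_comm]
  apply Finset.sum_congr rfl; intro k _
  apply Finset.sum_congr rfl; intro i _
  ring

lemma lemA {a b c r1 r2 r1' r2' : ℕ} {A : Matrix (Fin a) (Fin r1) ℝ}
    (X : Fin r1 → Fin b → Fin r2 → ℝ) (B : Matrix (Fin r2) (Fin c) ℝ)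
    {C : Matrix (Fin a) (Fin r1') ℝ} (Y : Fin r1' → Fin b → Fin r2' → ℝ)
    (D : Matrix (Fin r2') (Fin c) ℝ) (hAC : Aᵀ * C = 0) :
    tinner (tt A X B) (tt C Y D) = 0 := by
  rw [key]; simp [hAC]

lemma lemC {a b c r1 r2 r1' r2' : ℕ} (A : Matrix (Fin a) (Fin r1) ℝ)
    (X : Fin r1 → Fin b → Fin r2 → ℝ) {B : Matrix (Fin r2) (Fin c) ℝ}
    (C : Matrix (Fin a) (Fin r1') ℝ) (Y : Fin r1' → Fin b → Fin r2' → ℝ)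
    {D : Matrix (Fin r2') (Fin c) ℝ} (hBD : B * Dᵀ = 0) :
    tinner (tt A X B) (tt C Y D) = 0 := by
  rw [key]; simp [hBD]

lemma lemR {a b c r1 r2 r2' : ℕ} {A : Matrix (Fin a) (Fin r1) ℝ}
    {X : Fin r1 → Fin b → Fin r2 → ℝ} (B : Matrix (Fin r2) (Fin c) ℝ)
    {Y : Fin r1 → Fin b → Fin r2' → ℝ} (D : Matrix (Fin r2') (Fin c) ℝ)
    (hA : Aᵀ * A = 1) (hXY : (tR X)ᵀ * tR Y = 0) :
    tinner (tt A X B) (tt A Y D) = 0 := by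
  rw [key, hA]
  have h0 : ∀ q q', ∑ p, ∑ j, X p j q * Y p j q' = 0 := by
    intro q q'
    have := congrFun (congrFun hXY q) q'
    simp only [Matrix.mul_apply, tR, transpose_apply, Matrix.of_apply,
      Fintype.sum_prod_type, Matrix.zero_apply] at this
    rw [Finset.sum_comm] at this
    exact this
  have step : ∀ p : Fin r1, (∑ p', ∑ q, ∑ q',
      (1 : Matrix (Fin r1) (Fin r1) ℝ) p p' * ((B * Dᵀ) q q' * ∑ j, X p j q * Y p' j q'))
      = ∑ q, ∑ q', (B * Dᵀ) q q' * ∑ j, X p j q * Y p j q' := by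
    intro p
    rw [Finset.sum_eq_single p]
    · simp [Matrix.one_apply]
    · intro p' _ hne
      simp [Matrix.one_apply_ne' hne]
    · simp
  rw [Finset.sum_congr rfl (fun p _ => step p)]
  rw [Finset.sum_comm]
  apply Finset.sum_eq_zero; intro q _
  rw [Finset.sum_comm]
  apply Finset.sum_eq_zero; intro q' _
  rw [← Finset.mul_sum, h0 q q', mul_zero]

lemma lemL {a b c r1 r2 r1' : ℕ} (A : Matrix (Fin a) (Fin r1) ℝ)
    {X : Fin r1 → Fin b → Fin r2 → ℝ} {B : Matrix (Fin r2) (Fin c) ℝ}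
    (C : Matrix (Fin a) (Fin r1') ℝ) {Y : Fin r1' → Fin b → Fin r2 → ℝ}
    (hB : B * Bᵀ = 1) (hXY : tL X * (tL Y)ᵀ = 0) :
    tinner (tt A X B) (tt C Y B) = 0 := by
  rw [key, hB]
  have h0 : ∀ p p', ∑ q, ∑ j, X p j q * Y p' j q = 0 := by
    intro p p'
    have := congrFun (congrFun hXY p) p'
    simp only [Matrix.mul_apply, tL, transpose_apply, Matrix.of_apply,
      Fintype.sum_prod_type, Matrix.zero_apply] at this
    exact this
  apply Finset.sum_eq_zero; intro p _
  apply Finset.sum_eq_zero; intro p' _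
  simp only [Matrix.one_apply, mul_ite, mul_one, mul_zero, ite_mul, zero_mul]
  simp only [Finset.sum_ite_eq, Finset.mem_univ, if_true, one_mul]
  rw [← Finset.mul_sum, h0 p p', mul_zero]

lemma tinner_comm {a b c : ℕ} (Y Z : Fin a → Fin b → Fin c → ℝ) :
    tinner Y Z = tinner Z Y := by
  simp only [tinner, mul_comm]

set_option maxHeartbeats 1000000 in
theorem stmt15 {n1 n2 n3 r1 r2 s1 s2 : ℕ}
    (X1' : Matrix (Fin n1) (Fin r1) ℝ)
    (X2' X2'' : Fin r1 → Fin n2 → Fin r2 → ℝ)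
    (X3'' : Matrix (Fin r2) (Fin n3) ℝ)
    (U1 : Matrix (Fin n1) (Fin s1) ℝ) (W1d : Matrix (Fin n1) (Fin r1) ℝ)
    (U2 : Fin r1 → Fin n2 → Fin s2 → ℝ) (W2t : Fin r1 → Fin n2 → Fin r2 → ℝ)
    (Z2 : Fin s1 → Fin n2 → Fin s2 → ℝ) (V2d : Fin s1 → Fin n2 → Fin r2 → ℝ)
    (W3h : Matrix (Fin r2) (Fin n3) ℝ) (V3 : Matrix (Fin s2) (Fin n3) ℝ)
    (h1 : X1'ᵀ * X1' = 1) (h2' : (tR X2')ᵀ * tR X2' = 1)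
    (h2'' : tL X2'' * (tL X2'')ᵀ = 1) (h3 : X3'' * X3''ᵀ = 1)
    (o1 : U1ᵀ * X1' = 0) (o2 : W1dᵀ * X1' = 0)
    (o3 : (tR U2)ᵀ * tR X2' = 0)
    (o4 : W3h * X3''ᵀ = 0) (o5 : V3 * X3''ᵀ = 0)
    (o6 : tL V2d * (tL X2'')ᵀ = 0)
    (G : Fin n1 → Fin n2 → Fin n3 → ℝ)
    (hG : G = tt X1' X2' W3h + tt X1' U2 V3 + tt X1' W2t X3''
        + tt U1 Z2 V3 + tt U1 V2d X3'' + tt W1d X2'' X3'')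
    (v : Fin 6 → (Fin n1 → Fin n2 → Fin n3 → ℝ))
    (hv : v = ![tt X1' X2' W3h, tt X1' U2 V3, tt X1' W2t X3'',
        tt U1 Z2 V3, tt U1 V2d X3'', tt W1d X2'' X3'']) :
    ∀ i j : Fin 6, i ≠ j → tinner (v i) (v j) = 0 := by
  have o1' : X1'ᵀ * U1 = 0 := by
    have := congrArg Matrix.transpose o1
    rwa [Matrix.transpose_mul, Matrix.transpose_transpose, Matrix.transpose_zero] at this
  have o2' : X1'ᵀ * W1d = 0 := by
    have := congrArg Matrix.transpose o2
    rwa [Matrix.transpose_mul, Matrix.transpose_transpose, Matrix.transpose_zero] at this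
  have o3' : (tR X2')ᵀ * tR U2 = 0 := by
    have := congrArg Matrix.transpose o3
    rwa [Matrix.transpose_mul, Matrix.transpose_transpose, Matrix.transpose_zero] at this
  have h12 : tinner (tt X1' X2' W3h) (tt X1' U2 V3) = 0 := lemR W3h V3 h1 o3'
  have h13 : tinner (tt X1' X2' W3h) (tt X1' W2t X3'') = 0 := lemC _ _ _ _ o4
  have h14 : tinner (tt X1' X2' W3h) (tt U1 Z2 V3) = 0 := lemA _ _ _ _ o1'
  have h15 : tinner (tt X1' X2' W3h) (tt U1 V2d X3'') = 0 := lemA _ _ _ _ o1'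
  have h16 : tinner (tt X1' X2' W3h) (tt W1d X2'' X3'') = 0 := lemA _ _ _ _ o2'
  have h23 : tinner (tt X1' U2 V3) (tt X1' W2t X3'') = 0 := lemC _ _ _ _ o5
  have h24 : tinner (tt X1' U2 V3) (tt U1 Z2 V3) = 0 := lemA _ _ _ _ o1'
  have h25 : tinner (tt X1' U2 V3) (tt U1 V2d X3'') = 0 := lemA _ _ _ _ o1'
  have h26 : tinner (tt X1' U2 V3) (tt W1d X2'' X3'') = 0 := lemA _ _ _ _ o2'
  have h34 : tinner (tt X1' W2t X3'') (tt U1 Z2 V3) = 0 := lemA _ _ _ _ o1'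
  have h35 : tinner (tt X1' W2t X3'') (tt U1 V2d X3'') = 0 := lemA _ _ _ _ o1'
  have h36 : tinner (tt X1' W2t X3'') (tt W1d X2'' X3'') = 0 := lemA _ _ _ _ o2'
  have h45 : tinner (tt U1 Z2 V3) (tt U1 V2d X3'') = 0 := lemC _ _ _ _ o5
  have h46 : tinner (tt U1 Z2 V3) (tt W1d X2'' X3'') = 0 := lemC _ _ _ _ o5
  have h56 : tinner (tt U1 V2d X3'') (tt W1d X2'' X3'') = 0 := lemL U1 W1d h3 o6
  intro i j hij
  fin_cases i <;> fin_cases j <;> rw [hv]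
  · exact absurd rfl hij
  · exact h12
  · exact h13
  · exact h14
  · exact h15
  · exact h16
  · rw [tinner_comm]; exact h12
  · exact absurd rfl hij
  · exact h23
  · exact h24
  · exact h25
  · exact h26
  · rw [tinner_comm]; exact h13
  · rw [tinner_comm]; exact h23
  · exact absurd rfl hij
  · exact h34
  · exact h35
  · exact h36
  · rw [tinner_comm]; exact h14
  · rw [tinner_comm]; exact h24
  · rw [tinner_comm]; exact h34
  · exact absurd rfl hij
  · exact h45
  · exact h46
  · rw [tinner_comm]; exact h15
  · rw [tinner_comm]; exact h25
  · rw [tinner_comm]; exact h35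
  · rw [tinner_comm]; exact h45
  · exact absurd rfl hij
  · exact h56
  · rw [tinner_comm]; exact h16
  · rw [tinner_comm]; exact h26
  · rw [tinner_comm]; exact h36
  · rw [tinner_comm]; exact h46
  · rw [tinner_comm]; exact h56
  · exact absurd rfl hij
end
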